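/- arXiv:0804.3131 — 5 statements merged into one kernel-verified Lean document; each statement's English description precedes it below -/
import Mathlib

section
/- Let d ≥ 1 and e_1,...,e_d be reals. The (d+1)×(d+1) matrix whose i-th row is obtained from the row (e_1, e_2, ..., e_d) by inserting a 0 in the i-th position (so row i has entries e_1,...,e_{i-1}, 0, e_i,...,e_d) has determinant (-1)^d · (e_1+e_2+...+e_d) · (e_1·e_2·...·e_d). -/
/-!
Subtracting from each row the next one leaves in row `i < d` only `-e i` at position `i` and
`e i` at position `i + 1`. Replacing then each column by the sum of the columns up to it turns
row `i` into `-e i` times the `i`-th unit vector and the last row into the partial sums of `e`.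
The result is lower triangular with diagonal `-e 0, …, -e (d - 1), e 0 + ⋯ + e (d - 1)`, and
both operations have determinant one.
-/

open Finset

namespace Matrix

variable {R : Type*} [CommRing R]

def rowDiff (n : ℕ) : Matrix (Fin n) (Fin n) R :=
  of fun i k => (if k = i then 1 else 0) - if (k : ℕ) = i + 1 then 1 else 0

def upperOnes (n : ℕ) : Matrix (Fin n) (Fin n) R :=
  of fun l j => if l ≤ j then 1 else 0

theorem det_rowDiff (n : ℕ) : (rowDiff n : Matrix (Fin n) (Fin n) R).det = 1 := by
  rw [det_of_isUpperTriangular]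
  · simp [rowDiff]
  · intro i k hki
    have : (k : ℕ) < i := hki
    simp only [rowDiff, of_apply]
    rw [if_neg (by omega), if_neg (by omega), sub_zero]

theorem det_upperOnes (n : ℕ) : (upperOnes n : Matrix (Fin n) (Fin n) R).det = 1 := by
  rw [det_of_isUpperTriangular]
  · simp [upperOnes]
  · intro l j hjl
    exact if_neg (not_le.2 hjl)

theorem rowDiff_mul_apply_castSucc {n : ℕ} (A : Matrix (Fin (n + 1)) (Fin (n + 1)) R)
    (i : Fin n) (j : Fin (n + 1)) :
    (rowDiff (n + 1) * A : Matrix _ _ R) i.castSucc j = A i.castSucc j - A i.succ j := by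
  have hrow : ∀ k, rowDiff (n + 1) i.castSucc k =
      (if k = i.castSucc then (1 : R) else 0) - if k = i.succ then 1 else 0 := by
    intro k
    simp [rowDiff, Fin.ext_iff]
  simp [mul_apply, hrow, sub_mul, sum_sub_distrib]

theorem rowDiff_mul_apply_last {n : ℕ} (A : Matrix (Fin (n + 1)) (Fin (n + 1)) R)
    (j : Fin (n + 1)) :
    (rowDiff (n + 1) * A : Matrix _ _ R) (Fin.last n) j = A (Fin.last n) j := by
  have hrow : ∀ k, rowDiff (n + 1) (Fin.last n) k = if k = Fin.last n then (1 : R) else 0 := by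
    intro k
    simp [rowDiff, Fin.ext_iff]
    omega
  simp [mul_apply, hrow]

theorem mul_upperOnes_apply {n : ℕ} (A : Matrix (Fin n) (Fin n) R) (i j : Fin n) :
    (A * upperOnes n : Matrix _ _ R) i j = ∑ l ∈ Iic j, A i l := by
  simp [mul_apply, upperOnes, ← sum_filter, filter_ge_eq_Iic]

theorem det_rowDiff_mul_mul_upperOnes {n : ℕ} (A : Matrix (Fin n) (Fin n) R) :
    (rowDiff n * A * upperOnes n).det = A.det := by
  simp [det_rowDiff, det_upperOnes]

def insertZeroMatrix (e : ℕ → R) (d : ℕ) : Matrix (Fin (d + 1)) (Fin (d + 1)) R :=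
  of fun i j => if (j : ℕ) = i then 0 else if (j : ℕ) < i then e j else e (j - 1)

theorem insertZeroMatrix_castSucc_sub_succ (e : ℕ → R) {d : ℕ} (i : Fin d) (j : Fin (d + 1)) :
    insertZeroMatrix e d i.castSucc j - insertZeroMatrix e d i.succ j =
      e i * ((if j = i.succ then 1 else 0) - if j = i.castSucc then 1 else 0) := by
  rcases j with ⟨j, hj⟩
  simp only [insertZeroMatrix, of_apply, Fin.ext_iff, Fin.val_castSucc, Fin.val_succ]
  split_ifs <;> simp_all <;> omega

section

variable (e : ℕ → R) (d : ℕ)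

theorem rowDiff_mul_insertZeroMatrix_mul_upperOnes_apply_castSucc (i : Fin d) (j : Fin (d + 1)) :
    (rowDiff (d + 1) * insertZeroMatrix e d * upperOnes (d + 1) : Matrix _ _ R) i.castSucc j =
      e i * ((if i.succ ≤ j then 1 else 0) - if i.castSucc ≤ j then 1 else 0) := by
  simp only [mul_upperOnes_apply, rowDiff_mul_apply_castSucc, insertZeroMatrix_castSucc_sub_succ,
    ← mul_sum, sum_sub_distrib, sum_ite_eq', mem_Iic]

theorem rowDiff_mul_insertZeroMatrix_mul_upperOnes_apply_last_last :
    (rowDiff (d + 1) * insertZeroMatrix e d * upperOnes (d + 1) : Matrix _ _ R)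
      (Fin.last d) (Fin.last d) = ∑ i ∈ range d, e i := by
  rw [mul_upperOnes_apply, ← Fin.top_eq_last, Iic_top, Fin.top_eq_last, Fin.sum_univ_castSucc]
  have hrow (i : Fin d) : insertZeroMatrix e d (Fin.last d) i.castSucc = e i := by
    simp [insertZeroMatrix, i.isLt.ne]
  have hlast : insertZeroMatrix e d (Fin.last d) (Fin.last d) = 0 := by simp [insertZeroMatrix]
  simp only [rowDiff_mul_apply_last, hrow, hlast, add_zero]
  exact Fin.sum_univ_eq_sum_range e d

theorem isLowerTriangular_rowDiff_mul_insertZeroMatrix_mul_upperOnes :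
    IsLowerTriangular
      (rowDiff (d + 1) * insertZeroMatrix e d * upperOnes (d + 1) : Matrix _ _ R) := by
  intro i j (hij : i < j)
  induction i using Fin.lastCases with
  | last => exact absurd hij (Fin.le_last j).not_gt
  | cast i =>
    rw [rowDiff_mul_insertZeroMatrix_mul_upperOnes_apply_castSucc,
      if_pos (Fin.castSucc_lt_iff_succ_le.1 hij), if_pos hij.le, sub_self, mul_zero]

theorem det_insertZeroMatrix :
    (insertZeroMatrix e d).det = (-1) ^ d * (∑ i ∈ range d, e i) * ∏ i ∈ range d, e i := by
  rw [← det_rowDiff_mul_mul_upperOnes, det_of_isLowerTriangular _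
    (isLowerTriangular_rowDiff_mul_insertZeroMatrix_mul_upperOnes e d), Fin.prod_univ_castSucc,
    rowDiff_mul_insertZeroMatrix_mul_upperOnes_apply_last_last]
  simp [rowDiff_mul_insertZeroMatrix_mul_upperOnes_apply_castSucc, prod_neg,
    Fin.prod_univ_eq_prod_range]
  ring

end

end Matrix

theorem det_insert_zero_matrix_general (d : ℕ) (e : ℕ → ℝ) :
    Matrix.det (Matrix.of fun i j : Fin (d + 1) =>
        if (j : ℕ) = (i : ℕ) then (0 : ℝ)
        else if (j : ℕ) < (i : ℕ) then e (j : ℕ)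
        else e ((j : ℕ) - 1)) =
      (-1) ^ d * (∑ i ∈ Finset.range d, e i) * ∏ i ∈ Finset.range d, e i :=
  Matrix.det_insertZeroMatrix e d

theorem det_insert_zero_matrix (d : ℕ) (hd : 1 ≤ d) (e : ℕ → ℝ) :
    Matrix.det (Matrix.of fun i j : Fin (d + 1) =>
        if (j : ℕ) = (i : ℕ) then (0 : ℝ)
        else if (j : ℕ) < (i : ℕ) then e (j : ℕ)
        else e ((j : ℕ) - 1)) =
      (-1) ^ d * (∑ i ∈ Finset.range d, e i) * ∏ i ∈ Finset.range d, e i :=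
  det_insert_zero_matrix_general d e
end

section
/- Call a finite set of k disjoint pairs (p_1,q_1), ..., (p_k,q_k) of natural numbers with p_1 < q_1 < p_2 < q_2 < ... < p_k < q_k 'd-dispersed' if p_{j+1} ≥ q_j + d for all 1 ≤ j ≤ k-1. Then any collection of k disjoint ordered pairs n_1 < n_2 < ... < n_{2k-1} < n_{2k} (pairs (n_{2i-1}, n_{2i})) can be partitioned into at most ⌊d/2⌋ + 2 subcollections, each of which is d-dispersed. -/
/-! Colour the `i`-th pair by `i mod (⌊d/2⌋ + 2)`. Each pair lies strictly above the previous one,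
so the right endpoints grow by at least two per step; two pairs of the same colour are at least
`⌊d/2⌋ + 2` places apart, hence separated by a gap of at least `2 (⌊d/2⌋ + 2) - 1 ≥ d`. -/

section Interleaved

variable {k : ℕ} {p q : Fin k → ℕ}

theorem right_add_two_mul_le_right (hpq : ∀ i, p i < q i)
    (hord : ∀ i j : Fin k, i < j → q i < p j) {i j : Fin k} (hij : i ≤ j) :
    q i + 2 * (j - i : ℕ) ≤ q j := by
  obtain ⟨n, hn⟩ := Nat.exists_eq_add_of_le (Fin.le_def.mp hij)
  induction n generalizing j with
  | zero =>
    obtain rfl : j = i := Fin.ext hn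
    simp
  | succ n ih =>
    let j' : Fin k := ⟨i + n, by omega⟩
    have hq : q i + 2 * n ≤ q j' := by
      simpa [j'] using ih (j := j') (Fin.le_def.mpr (by simp [j'])) rfl
    have hlt : q j' < p j := hord j' j (Fin.lt_def.mpr (by simp [j']; omega))
    have := hpq j
    omega

theorem right_add_two_mul_le_left_add_one (hpq : ∀ i, p i < q i)
    (hord : ∀ i j : Fin k, i < j → q i < p j) {i j : Fin k} (hij : i < j) :
    q i + 2 * (j - i : ℕ) ≤ p j + 1 := by
  let j' : Fin k := ⟨j - 1, by omega⟩
  have hq : q i + 2 * (j' - i : ℕ) ≤ q j' :=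
    right_add_two_mul_le_right hpq hord (Fin.le_def.mpr (by simp [j']; omega))
  have hlt : q j' < p j := hord j' j (Fin.lt_def.mpr (by simp [j']; omega))
  have hj' : (j' : ℕ) = j - 1 := rfl
  omega

end Interleaved

/-- Sublemma 14: any ordered collection of `k` disjoint pairs
`p 0 < q 0 < p 1 < q 1 < ...` can be partitioned into at most `⌊d/2⌋ + 2`
`d`-dispersed subcollections. -/
theorem sublemma14 (d k : ℕ) (p q : Fin k → ℕ)
    (hpq : ∀ i, p i < q i) (hord : ∀ i j : Fin k, i < j → q i < p j) :
    ∃ f : Fin k → Fin (d / 2 + 2), ∀ i j : Fin k, f i = f j → i < j → q i + d ≤ p j := by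
  refine ⟨fun i => ⟨i % (d / 2 + 2), Nat.mod_lt _ (by omega)⟩, fun i j hsame hij => ?_⟩
  have hmod : (j : ℕ) % (d / 2 + 2) = i % (d / 2 + 2) := (Fin.mk.inj_iff.mp hsame).symm
  have hfar : d / 2 + 2 ≤ (j - i : ℕ) := Nat.le_of_dvd (Nat.sub_pos_of_lt hij)
    (Nat.dvd_of_mod_eq_zero (Nat.sub_mod_eq_zero_of_mod_eq hmod))
  have := right_add_two_mul_le_left_add_one hpq hord hij
  omega
end

section
/- Let x : ℕ → ℝ, d ≥ 1, and suppose M ≥ 0 is a real number such that for every finite collection of d-dispersed pairs (p_1 < q_1 < ... < p_s < q_s with p_{j+1} ≥ q_j + d) one has ∑_{j=1}^s (x(q_j) - x(p_j))^2 ≤ M. Then for every finite collection of disjoint pairs n_1 < n_2 < ... < n_{2k-1} < n_{2k}, one has ∑_{i=1}^k (x(n_{2i}) - x(n_{2i-1}))^2 ≤ (⌊d/2⌋ + 2) · M. -/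
/-!
Split the pairs according to their index modulo `m = ⌊d/2⌋ + 1`. Two pairs in the same class
have indices differing by at least `m`, so between the right end of the first and the left end
of the second lie at least `2m - 1 ≥ d` steps of the strictly increasing sequence: each class is
`d`-dispersed and contributes at most `M`, and there are `m ≤ ⌊d/2⌋ + 2` classes.
-/

open Finset

def DispersedSqSumLE (d : ℕ) (x : ℕ → ℝ) (M : ℝ) : Prop :=
  ∀ (s : ℕ) (p q : Fin s → ℕ), (∀ j, p j < q j) →
    (∀ i j : Fin s, i < j → q i + d ≤ p j) → ∑ j, (x (q j) - x (p j)) ^ 2 ≤ M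

namespace DispersedSqSumLE

variable {d : ℕ} {x : ℕ → ℝ} {M : ℝ}

theorem nonneg (h : DispersedSqSumLE d x M) : 0 ≤ M := by
  simpa using h 0 Fin.elim0 Fin.elim0 (fun j => j.elim0) (fun i => i.elim0)

theorem sum_le {α : Type*} [LinearOrder α] (h : DispersedSqSumLE d x M) (I : Finset α)
    (p q : α → ℕ) (hpq : ∀ i ∈ I, p i < q i)
    (hdisp : ∀ i ∈ I, ∀ j ∈ I, i < j → q i + d ≤ p j) :
    ∑ i ∈ I, (x (q i) - x (p i)) ^ 2 ≤ M := by
  set e := I.orderIsoOfFin rfl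
  have hsum : ∑ i ∈ I, (x (q i) - x (p i)) ^ 2 =
      ∑ j, (x (q (e j)) - x (p (e j))) ^ 2 := by
    rw [← sum_coe_sort I, ← e.toEquiv.sum_comp]
    rfl
  rw [hsum]
  exact h _ _ _ (fun j => hpq _ (e j).2)
    (fun i j hij => hdisp _ (e i).2 _ (e j).2 (e.strictMono hij))

end DispersedSqSumLE

theorem Fin.add_sub_le_of_strictMono {N : ℕ} {n : Fin N → ℕ} (hn : StrictMono n)
    {a b : Fin N} (hab : a ≤ b) : n a + (b - a : ℕ) ≤ n b := by
  have hcard : #(Icc a b) ≤ #(Icc (n a) (n b)) :=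
    card_le_card_of_injOn n (fun i hi => by
      rw [coe_Icc, Set.mem_Icc] at *
      exact ⟨hn.monotone hi.1, hn.monotone hi.2⟩) hn.injective.injOn
  rw [Fin.card_Icc, Nat.card_Icc] at hcard
  have := hn.monotone hab
  have : (a : ℕ) ≤ b := hab
  omega

theorem Fin.strictMono_odd_add_le_even {d k : ℕ} {n : Fin (2 * k) → ℕ} (hn : StrictMono n)
    {i j : Fin k} (hij : (i : ℕ) + (d / 2 + 1) ≤ j) :
    n ⟨2 * i + 1, by omega⟩ + d ≤ n ⟨2 * j, by omega⟩ := by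
  have := Fin.add_sub_le_of_strictMono hn (a := ⟨2 * i + 1, by omega⟩) (b := ⟨2 * j, by omega⟩)
    (by rw [Fin.mk_le_mk]; omega)
  simp only at this
  omega

theorem lemma13_quantitative (d : ℕ) (x : ℕ → ℝ) (M : ℝ)
    (h : ∀ (s : ℕ) (p q : Fin s → ℕ), (∀ j, p j < q j) →
      (∀ i j : Fin s, i < j → q i + d ≤ p j) →
      ∑ j, (x (q j) - x (p j)) ^ 2 ≤ M) :
    ∀ (k : ℕ) (n : Fin (2 * k) → ℕ), StrictMono n →
      ∑ i : Fin k,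
        (x (n ⟨2 * (i : ℕ) + 1, by have := i.isLt; omega⟩) -
         x (n ⟨2 * (i : ℕ), by have := i.isLt; omega⟩)) ^ 2 ≤
      ((d / 2 + 2 : ℕ) : ℝ) * M := by
  intro k n hn
  have h : DispersedSqSumLE d x M := h
  set m := d / 2 + 1
  have hfiber (r : ℕ) : ∑ i ∈ univ.filter (fun i : Fin k => (i : ℕ) % m = r),
      (x (n ⟨2 * i + 1, by omega⟩) - x (n ⟨2 * i, by omega⟩)) ^ 2 ≤ M := by
    refine h.sum_le _ _ _ (fun i _ => hn (by simp [Fin.lt_def])) fun i hi j hj hij => ?_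
    simp only [mem_filter, mem_univ, true_and] at hi hj
    have hdvd : m ∣ (j : ℕ) - i :=
      Nat.dvd_of_mod_eq_zero (Nat.sub_mod_eq_zero_of_mod_eq (hj.trans hi.symm))
    have := Nat.le_of_dvd (Nat.sub_pos_of_lt hij) hdvd
    exact Fin.strictMono_odd_add_le_even hn (by omega)
  rw [← sum_fiberwise_of_maps_to (g := fun i : Fin k => (i : ℕ) % m) (t := range m)
    fun i _ => mem_range.2 (Nat.mod_lt _ (by omega))]
  calc _ ≤ ∑ _r ∈ range m, M := sum_le_sum fun r _ => hfiber r
    _ = m * M := by simp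
    _ ≤ ((d / 2 + 2 : ℕ) : ℝ) * M := by gcongr; exacts [h.nonneg, by omega]
end

section
/- Let d ≥ 1, e = (e_1,...,e_d) ∈ R^d with e_1 ≠ 0 and e_1 + ... + e_d ≠ 0, and let C > 0 be a constant such that for all reals x(1),...,x(d+1) there exist 1 ≤ n(1) < ... < n(d) ≤ d+1 with |∑_{j=1}^d e_j x(n(j))| ≥ C|x(1)|. If x : ℕ → ℝ satisfies: the suprema over all d-sets ω of the (e,ω)-variation of x is finite (i.e. there is M with ∑ blocks (e · x(block))^2 ≤ M for all d-sets), then ∑_{m=1}^∞ x(m)^2 < ∞. -/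
/-!
Fix a residue `r` modulo `d + 1`. The windows `[i(d+1) + r, i(d+1) + r + d]`, `i = 0, 1, …`, are
disjoint and consecutive, and in the `i`-th window the hypothesis on `C` picks `d` increasing
positions whose `e`-combination dominates `C |x(i(d+1) + r)|`. Concatenating these choices gives
one `d`-set, so the bounded variation yields `C² ∑ᵢ x(i(d+1) + r)² ≤ M`. Summing over the `d + 1`
residues gives square-summability.
-/

open Finset

theorem summable_of_summable_residues {f : ℕ → ℝ} (hf : 0 ≤ f) (L : ℕ) [NeZero L]
    (h : ∀ r : Fin L, Summable fun i => f (i * L + r)) : Summable f := by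
  rw [← (Nat.divModEquiv L).symm.summable_iff, ← (Equiv.prodComm _ _).summable_iff]
  exact (summable_prod_of_nonneg fun _ => hf _).2 ⟨h, .of_finite⟩

section BlockConcat

variable {d L : ℕ} [NeZero d]

def blockConcat (σ : ℕ → Fin d → Fin L) (p : ℕ) : ℕ :=
  (Nat.divModEquiv d p).1 * L + σ (Nat.divModEquiv d p).1 (Nat.divModEquiv d p).2

theorem blockConcat_mul_add (σ : ℕ → Fin d → Fin L) (i : ℕ) (j : Fin d) :
    blockConcat σ (i * d + j) = i * L + σ i j := by
  have := (Nat.divModEquiv d).apply_symm_apply (i, j)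
  simp only [Nat.divModEquiv_symm_apply] at this
  rw [blockConcat, this]

theorem strictMono_blockConcat {σ : ℕ → Fin d → Fin L} (hσ : ∀ i, StrictMono (σ i)) :
    StrictMono (blockConcat σ) := by
  have hsurj : ∀ p, ∃ (i : ℕ) (j : Fin d), p = i * d + j := fun p =>
    ⟨_, _, ((Nat.divModEquiv d).symm_apply_apply p).symm⟩
  intro p q hpq
  obtain ⟨i, j, rfl⟩ := hsurj p
  obtain ⟨i', j', rfl⟩ := hsurj q
  rw [blockConcat_mul_add, blockConcat_mul_add]
  rcases lt_trichotomy i i' with hi | rfl | hi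
  · have := (σ i j).isLt
    nlinarith [Nat.succ_le_of_lt hi]
  · have : j < j' := by simpa using hpq
    simpa using hσ i this
  · have := j'.isLt
    nlinarith [Nat.succ_le_of_lt hi]

end BlockConcat

theorem sum_sq_mul_residue_le {d : ℕ} [NeZero d] {e x : ℕ → ℝ} {C M : ℝ} (hC0 : 0 ≤ C)
    (hC : ∀ x : Fin (d + 1) → ℝ, ∃ m : Fin d → Fin (d + 1), StrictMono m ∧
      C * |x 0| ≤ |∑ j : Fin d, e j * x (m j)|)
    (hM : ∀ (k : ℕ) (n : ℕ → ℕ), StrictMono n →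
      ∑ i ∈ range k, (∑ j ∈ range d, e j * x (n (i * d + j))) ^ 2 ≤ M)
    (r k : ℕ) : ∑ i ∈ range k, (C * x (i * (d + 1) + r)) ^ 2 ≤ M := by
  choose σ hσ hσC using fun i => hC fun t => x (i * (d + 1) + t + r)
  refine le_trans (sum_le_sum fun i _ => ?_) (hM k (blockConcat σ · + r)
    ((strictMono_blockConcat hσ).add_const r))
  have hblock : ∑ j ∈ range d, e j * x (blockConcat σ (i * d + j) + r) =
      ∑ j : Fin d, e j * x (i * (d + 1) + σ i j + r) := by
    rw [← Fin.sum_univ_eq_sum_range (fun j => e j * x (blockConcat σ (i * d + j) + r))]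
    simp only [blockConcat_mul_add]
  rw [hblock, ← sq_abs, ← sq_abs (∑ j : Fin d, _), abs_mul, abs_of_nonneg hC0]
  gcongr
  simpa using hσC i

theorem lemma10_general (d : ℕ) (hd : 1 ≤ d) (e : ℕ → ℝ) (C : ℝ) (hCpos : 0 < C)
    (hC : ∀ x : Fin (d + 1) → ℝ, ∃ m : Fin d → Fin (d + 1), StrictMono m ∧
      C * |x 0| ≤ |∑ j : Fin d, e (j : ℕ) * x (m j)|)
    (x : ℕ → ℝ) (M : ℝ)
    (hM : ∀ (k : ℕ) (n : ℕ → ℕ), StrictMono n →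
      ∑ i ∈ Finset.range k, (∑ j ∈ Finset.range d, e j * x (n (i * d + j))) ^ 2 ≤ M) :
    Summable fun m => x m ^ 2 := by
  have : NeZero d := ⟨by omega⟩
  refine summable_of_summable_residues (fun m => sq_nonneg (x m)) (d + 1) fun r =>
    summable_of_sum_range_le (c := M / C ^ 2) (fun i => sq_nonneg _) fun k => ?_
  rw [le_div_iff₀' (by positivity), mul_sum]
  simpa only [mul_pow] using sum_sq_mul_residue_le hCpos.le hC hM r k

theorem lemma10 (d : ℕ) (hd : 1 ≤ d) (e : ℕ → ℝ) (he : e 0 ≠ 0)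
    (hsum : ∑ i ∈ Finset.range d, e i ≠ 0) (C : ℝ) (hCpos : 0 < C)
    (hC : ∀ x : Fin (d + 1) → ℝ, ∃ m : Fin d → Fin (d + 1), StrictMono m ∧
      C * |x 0| ≤ |∑ j : Fin d, e (j : ℕ) * x (m j)|)
    (x : ℕ → ℝ) (M : ℝ)
    (hM : ∀ (k : ℕ) (n : ℕ → ℕ), StrictMono n →
      ∑ i ∈ Finset.range k, (∑ j ∈ Finset.range d, e j * x (n (i * d + j))) ^ 2 ≤ M) :
    Summable fun m => x m ^ 2 :=
  lemma10_general d hd e C hCpos hC x M hM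
end

section
/- For every d ≥ 1 and reals e_1,...,e_d with e_1 ≠ 0, the set J(e) of real sequences x tending to 0 with finite e-variation ||x||_e = sup over d-sets ω of the (e,ω)-variation, equipped with ||·||_e, is a normed vector space (in particular ||·||_e is a norm on J(e): it is finite, homogeneous, subadditive, and ||x||_e = 0 implies x = 0). -/
/-!
Each `(e,ω)`-variation of `x` is the Euclidean norm of the vector of block sums of `x`, which
depends linearly on `x`; so homogeneity and the triangle inequality pass to the supremum.
For definiteness, the single block `n j = m + j * (t + 1)` gives
`|∑ j < d, e j * x (m + j * (t + 1))| ≤ ‖x‖ₑ`, and as `t → ∞` every term but the first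
vanishes because `x → 0`, leaving `|e 0 * x m| ≤ ‖x‖ₑ`.
-/

/-- The set of `(e,ω)`-variations of `x` over all `d`-sets `ω`: a `d`-set is given by
a strictly increasing sequence of naturals split into `k` consecutive blocks of `d`. -/
def eVarSet (d : ℕ) (e x : ℕ → ℝ) : Set ℝ :=
  {r | ∃ (k : ℕ) (n : ℕ → ℕ), StrictMono n ∧
    r = Real.sqrt (∑ i ∈ Finset.range k,
          (∑ j ∈ Finset.range d, e j * x (n (i * d + j))) ^ 2)}

/-- `J(e)`: sequences tending to zero with finite `e`-variation. -/
def Je (d : ℕ) (e : ℕ → ℝ) : Set (ℕ → ℝ) :=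
  {x | Filter.Tendsto x Filter.atTop (nhds 0) ∧ BddAbove (eVarSet d e x)}

/-- The `e`-variation norm. -/
noncomputable def eNorm (d : ℕ) (e x : ℕ → ℝ) : ℝ := sSup (eVarSet d e x)

open Filter Topology Pointwise

def blockSums (d : ℕ) (e : ℕ → ℝ) (k : ℕ) (n : ℕ → ℕ) :
    (ℕ → ℝ) →ₗ[ℝ] EuclideanSpace ℝ (Fin k) where
  toFun x := WithLp.toLp 2 fun i => ∑ j ∈ Finset.range d, e j * x (n (i * d + j))
  map_add' x y := by ext i; simp [mul_add, Finset.sum_add_distrib]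
  map_smul' c x := by ext i; simp [Finset.mul_sum, mul_left_comm]

section Variation

variable {d : ℕ} {e x y : ℕ → ℝ}

lemma norm_blockSums (k : ℕ) (n : ℕ → ℕ) :
    ‖blockSums d e k n x‖ =
      √(∑ i ∈ Finset.range k, (∑ j ∈ Finset.range d, e j * x (n (i * d + j))) ^ 2) := by
  simp only [EuclideanSpace.norm_eq, Real.norm_eq_abs, sq_abs]
  exact congrArg _ <| Fin.sum_univ_eq_sum_range
    (fun i => (∑ j ∈ Finset.range d, e j * x (n (i * d + j))) ^ 2) k

lemma mem_eVarSet_iff {r : ℝ} :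
    r ∈ eVarSet d e x ↔
      ∃ (k : ℕ) (n : ℕ → ℕ), StrictMono n ∧ r = ‖blockSums d e k n x‖ := by
  simp only [norm_blockSums]; rfl

lemma zero_mem_eVarSet : (0 : ℝ) ∈ eVarSet d e x :=
  ⟨0, id, strictMono_id, by simp⟩

lemma nonneg_of_mem_eVarSet {r : ℝ} (hr : r ∈ eVarSet d e x) : 0 ≤ r := by
  obtain ⟨k, n, -, rfl⟩ := hr
  exact Real.sqrt_nonneg _

lemma abs_sum_mem_eVarSet {n : ℕ → ℕ} (hn : StrictMono n) :
    |∑ j ∈ Finset.range d, e j * x (n j)| ∈ eVarSet d e x :=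
  ⟨1, n, hn, by simp [Real.sqrt_sq_eq_abs]⟩

lemma eVarSet_smul (c : ℝ) : eVarSet d e (c • x) = |c| • eVarSet d e x := by
  ext r
  simp only [Set.mem_smul_set, mem_eVarSet_iff, map_smul, norm_smul, Real.norm_eq_abs,
    smul_eq_mul]
  constructor
  · rintro ⟨k, n, hn, rfl⟩
    exact ⟨_, ⟨k, n, hn, rfl⟩, rfl⟩
  · rintro ⟨_, ⟨k, n, hn, rfl⟩, rfl⟩
    exact ⟨k, n, hn, rfl⟩

lemma le_add_of_mem_eVarSet_add {r : ℝ} (hx : BddAbove (eVarSet d e x))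
    (hy : BddAbove (eVarSet d e y)) (hr : r ∈ eVarSet d e (x + y)) :
    r ≤ eNorm d e x + eNorm d e y := by
  obtain ⟨k, n, hn, rfl⟩ := mem_eVarSet_iff.1 hr
  calc ‖blockSums d e k n (x + y)‖
      ≤ ‖blockSums d e k n x‖ + ‖blockSums d e k n y‖ := by
        rw [map_add]; exact norm_add_le _ _
    _ ≤ eNorm d e x + eNorm d e y :=
        add_le_add (le_csSup hx (mem_eVarSet_iff.2 ⟨k, n, hn, rfl⟩))
          (le_csSup hy (mem_eVarSet_iff.2 ⟨k, n, hn, rfl⟩))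

lemma eNorm_nonneg : 0 ≤ eNorm d e x :=
  Real.sSup_nonneg fun _ => nonneg_of_mem_eVarSet

lemma eNorm_smul (c : ℝ) : eNorm d e (c • x) = |c| * eNorm d e x := by
  rw [eNorm, eVarSet_smul, Real.sSup_smul_of_nonneg (abs_nonneg c), smul_eq_mul, eNorm]

lemma eNorm_add_le (hx : BddAbove (eVarSet d e x)) (hy : BddAbove (eVarSet d e y)) :
    eNorm d e (x + y) ≤ eNorm d e x + eNorm d e y :=
  csSup_le ⟨0, zero_mem_eVarSet⟩ fun _ => le_add_of_mem_eVarSet_add hx hy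

lemma add_mem_Je (hx : x ∈ Je d e) (hy : y ∈ Je d e) : x + y ∈ Je d e :=
  ⟨by rw [← add_zero (0 : ℝ)]; exact hx.1.add hy.1,
    ⟨_, fun _ => le_add_of_mem_eVarSet_add hx.2 hy.2⟩⟩

lemma smul_mem_Je (c : ℝ) (hx : x ∈ Je d e) : c • x ∈ Je d e :=
  ⟨by rw [← smul_zero c]; exact hx.1.const_smul c, by
    rw [eVarSet_smul]; exact hx.2.smul_of_nonneg (abs_nonneg c)⟩

lemma tendsto_sum_spread (hx : Tendsto x atTop (𝓝 0)) (hd : 1 ≤ d) (m : ℕ) :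
    Tendsto (fun t : ℕ => ∑ j ∈ Finset.range d, e j * x (m + j * (t + 1))) atTop
      (𝓝 (e 0 * x m)) := by
  obtain ⟨d, rfl⟩ := Nat.exists_eq_add_of_le' hd
  have hterm (j : ℕ) :
      Tendsto (fun t : ℕ => e (j + 1) * x (m + (j + 1) * (t + 1))) atTop (𝓝 0) := by
    have : Tendsto (fun t : ℕ => m + (j + 1) * (t + 1)) atTop atTop :=
      tendsto_atTop_mono (fun t => show t ≤ _ by nlinarith) tendsto_id
    simpa using (hx.comp this).const_mul (e (j + 1))
  simp only [Finset.sum_range_succ']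
  simpa using (tendsto_finsetSum _ fun j _ => hterm j).add_const (e 0 * x m)

lemma abs_mul_le_eNorm (hx : x ∈ Je d e) (hd : 1 ≤ d) (m : ℕ) : |e 0 * x m| ≤ eNorm d e x :=
  le_of_tendsto' (tendsto_sum_spread hx.1 hd m).abs fun t =>
    le_csSup hx.2 (abs_sum_mem_eVarSet ((strictMono_mul_right_of_pos t.succ_pos).const_add m))

lemma eq_zero_of_eNorm_eq_zero (hd : 1 ≤ d) (he : e 0 ≠ 0) (hx : x ∈ Je d e)
    (h : eNorm d e x = 0) : x = 0 := by
  funext m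
  have hm := abs_mul_le_eNorm hx hd m
  rw [h, abs_nonpos_iff, mul_eq_zero] at hm
  exact hm.resolve_left he

end Variation

/-- Proposition 4: `(J(e), ‖·‖ₑ)` is a normed vector space. -/
theorem Je_normed (d : ℕ) (hd : 1 ≤ d) (e : ℕ → ℝ) (he : e 0 ≠ 0) :
    (∀ x ∈ Je d e, ∀ y ∈ Je d e, x + y ∈ Je d e) ∧
    (∀ (c : ℝ), ∀ x ∈ Je d e, c • x ∈ Je d e) ∧
    (∀ x ∈ Je d e, 0 ≤ eNorm d e x) ∧
    (∀ (c : ℝ), ∀ x ∈ Je d e, eNorm d e (c • x) = |c| * eNorm d e x) ∧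
    (∀ x ∈ Je d e, ∀ y ∈ Je d e, eNorm d e (x + y) ≤ eNorm d e x + eNorm d e y) ∧
    (∀ x ∈ Je d e, eNorm d e x = 0 → x = 0) :=
  ⟨fun _ hx _ hy => add_mem_Je hx hy, fun c _ hx => smul_mem_Je c hx,
    fun _ _ => eNorm_nonneg, fun c _ _ => eNorm_smul c,
    fun _ hx _ hy => eNorm_add_le hx.2 hy.2, fun _ hx => eq_zero_of_eNorm_eq_zero hd he hx⟩
end
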